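/- Visser's rule is NNIL(par)-preservative in IPC: with B = ⋀_{i=1}^n (E_i → F_i) and C = ⋁_{i=n+1}^{n+m} E_i, we have (B → C) ⊳_{NNIL(par)} ⋁_{i=1}^{n+m} (B ↦ E_i), where (B ↦ E) := E if E is ⊥ or a parameter, and B → E otherwise. That is, for every E ∈ NNIL(par), IPC ⊢ E → (B → C) implies IPC ⊢ E → ⋁_{i=1}^{n+m} (B ↦ E_i). -/

import Mathlib

inductive Fm : Type
  | bot : Fm
  | atom : ℕ → Fm
  | and : Fm → Fm → Fm
  | or : Fm → Fm → Fm
  | imp : Fm → Fm → Fm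
deriving DecidableEq

namespace Fm

def neg (A : Fm) : Fm := A.imp .bot
def top : Fm := Fm.bot.imp .bot
def iff (A B : Fm) : Fm := (A.imp B).and (B.imp A)

def subst (θ : ℕ → Fm) : Fm → Fm
  | bot => bot
  | atom n => θ n
  | and A B => (A.subst θ).and (B.subst θ)
  | or A B => (A.subst θ).or (B.subst θ)
  | imp A B => (A.subst θ).imp (B.subst θ)

def atoms : Fm → Finset ℕ
  | bot => ∅
  | atom n => {n}
  | and A B => A.atoms ∪ B.atoms
  | or A B => A.atoms ∪ B.atoms
  | imp A B => A.atoms ∪ B.atoms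

/-- maximal nesting of implications in the left/overall: `c→`. -/
def cimp : Fm → ℕ
  | bot => 0
  | atom _ => 0
  | and A B => max A.cimp B.cimp
  | or A B => max A.cimp B.cimp
  | imp A B => 1 + max A.cimp B.cimp

end Fm

def bigAndL (l : List Fm) : Fm := l.foldr Fm.and Fm.top
def bigOrL (l : List Fm) : Fm := l.foldr Fm.or Fm.bot

/-- nonempty disjunction -/
def bigOrNE : Fm → List Fm → Fm
  | A, [] => A
  | A, B :: l => A.or (bigOrNE B l)

/-- Hilbert-style intuitionistic propositional calculus. -/
inductive IPC : Fm → Prop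
  | imp_k (A B : Fm) : IPC (A.imp (B.imp A))
  | imp_s (A B C : Fm) : IPC ((A.imp (B.imp C)).imp ((A.imp B).imp (A.imp C)))
  | and_intro (A B : Fm) : IPC (A.imp (B.imp (A.and B)))
  | and_left (A B : Fm) : IPC ((A.and B).imp A)
  | and_right (A B : Fm) : IPC ((A.and B).imp B)
  | or_inl (A B : Fm) : IPC (A.imp (A.or B))
  | or_inr (A B : Fm) : IPC (B.imp (A.or B))
  | or_elim (A B C : Fm) : IPC ((A.imp C).imp ((B.imp C).imp ((A.or B).imp C)))
  | exfalso (A : Fm) : IPC (Fm.bot.imp A)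
  | mp {A B : Fm} : IPC (A.imp B) → IPC A → IPC B

/-- Γ-preservativity in the logic T : `A ⊳_{T,Γ} B`. -/
def Pres (T : Fm → Prop) (Γ : Set Fm) (A B : Fm) : Prop :=
  ∀ E ∈ Γ, T (E.imp A) → T (E.imp B)

/-- substitutions are identity on the parameters. -/
def IdOnPar (par : Finset ℕ) (θ : ℕ → Fm) : Prop :=
  ∀ p ∈ par, θ p = Fm.atom p

/-- implication-free formulas. -/
inductive NI : Fm → Prop
  | bot : NI .bot
  | atom (n : ℕ) : NI (.atom n)
  | and {A B : Fm} : NI A → NI B → NI (A.and B)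
  | or {A B : Fm} : NI A → NI B → NI (A.or B)

/-- No Nested Implications in the Left. -/
inductive NNIL : Fm → Prop
  | bot : NNIL .bot
  | atom (n : ℕ) : NNIL (.atom n)
  | and {A B : Fm} : NNIL A → NNIL B → NNIL (A.and B)
  | or {A B : Fm} : NNIL A → NNIL B → NNIL (A.or B)
  | imp {A B : Fm} : NI A → NNIL B → NNIL (A.imp B)

def IPCPrime (A : Fm) : Prop :=
  ∀ B C, IPC (A.imp (B.or C)) → IPC (A.imp B) ∨ IPC (A.imp C)

/-- T-components: `⋀Γ ∧ ⋀Δ`, Γ atoms, Δ implications with atomic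
antecedents not T-provable from Γ. -/
def IsComponentOver (T : Fm → Prop) (B : Fm) : Prop :=
  ∃ (as : List ℕ) (imps : List (ℕ × Fm)),
    B = (bigAndL (as.map Fm.atom)).and
          (bigAndL (imps.map fun p => (Fm.atom p.1).imp p.2)) ∧
    ∀ p ∈ imps, ¬ T ((bigAndL (as.map Fm.atom)).imp (Fm.atom p.1))

/-- `(B ↦ E)`: E itself if E is ⊥ or a parameter, else B → E. -/
def hook (par : Finset ℕ) (B : Fm) : Fm → Fm
  | .bot => .bot
  | .atom p => if p ∈ par then .atom p else B.imp (.atom p)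
  | E => B.imp E

/-!
Suppose `IPC ⊢ E → (B → C)` but `IPC ⊬ E → ⋁ᵢ (B ↦ Eᵢ)`. Extend `E` to a prime theory `Δ`
avoiding every `B ↦ Eᵢ`, and build a Kripke model: the prime theories containing `Δ` and `B`
(a canonical model, where forcing is membership), below which a new root is placed that forces
exactly the parameters lying in `Δ`. Since `E` is NNIL over the parameters, the root forces `E`.
Each `Eᵢ` fails at the root: a parameter or `⊥` because it is not in `Δ`, anything else because
`B → Eᵢ ∉ Δ` yields a world above the root refuting `Eᵢ`. Hence the root forces `B`, because
above the root `B` holds, and then `B → C` makes it force some disjunct of `C`, a contradiction.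
-/

namespace IPC

theorem imp_self (A : Fm) : IPC (A.imp A) :=
  mp (mp (imp_s A (A.imp A) A) (imp_k A (A.imp A))) (imp_k A A)

theorem imp_trans {A B C : Fm} (h₁ : IPC (A.imp B)) (h₂ : IPC (B.imp C)) : IPC (A.imp C) :=
  mp (mp (imp_s A B C) (mp (imp_k (B.imp C) A) h₂)) h₁

theorem bigAndL_imp_of_mem {l : List Fm} {X : Fm} (hX : X ∈ l) : IPC ((bigAndL l).imp X) := by
  induction l with
  | nil => exact absurd hX List.not_mem_nil
  | cons a l ih =>
    rcases List.mem_cons.1 hX with rfl | hX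
    · exact and_left _ _
    · exact imp_trans (and_right a (bigAndL l)) (ih hX)

theorem imp_bigOrL_of_mem {l : List Fm} {X : Fm} (hX : X ∈ l) : IPC (X.imp (bigOrL l)) := by
  induction l with
  | nil => exact absurd hX List.not_mem_nil
  | cons a l ih =>
    rcases List.mem_cons.1 hX with rfl | hX
    · exact or_inl _ _
    · exact imp_trans (ih hX) (or_inr a (bigOrL l))

end IPC

inductive Derivable (Γ : Set Fm) : Fm → Prop
  | ax {A : Fm} : A ∈ Γ → Derivable Γ A
  | ipc {A : Fm} : IPC A → Derivable Γ A
  | mp {A B : Fm} : Derivable Γ (A.imp B) → Derivable Γ A → Derivable Γ B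

namespace Derivable

variable {Γ Γ' : Set Fm} {A B : Fm}

theorem mono (h : Derivable Γ A) (hΓ : Γ ⊆ Γ') : Derivable Γ' A := by
  induction h with
  | ax hA => exact ax (hΓ hA)
  | ipc hA => exact ipc hA
  | mp _ _ ih₁ ih₂ => exact mp ih₁ ih₂

theorem of_ipc_imp (hAB : IPC (A.imp B)) (hA : Derivable Γ A) : Derivable Γ B :=
  mp (ipc hAB) hA

theorem deduction (h : Derivable (insert A Γ) B) : Derivable Γ (A.imp B) := by
  induction h with
  | @ax X hX =>
    rcases hX with rfl | hX
    · exact ipc (IPC.imp_self _)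
    · exact of_ipc_imp (IPC.imp_k X A) (ax hX)
  | @ipc X hX => exact of_ipc_imp (IPC.imp_k X A) (ipc hX)
  | @mp X Y _ _ ih₁ ih₂ => exact mp (of_ipc_imp (IPC.imp_s A X Y) ih₁) ih₂

theorem ipc_of_empty (h : Derivable ∅ A) : IPC A := by
  induction h with
  | ax hA => exact absurd hA (Set.notMem_empty _)
  | ipc hA => exact hA
  | mp _ _ ih₁ ih₂ => exact IPC.mp ih₁ ih₂

theorem exists_of_sUnion {c : Set (Set Fm)} (hc : IsChain (· ⊆ ·) c) (hne : c.Nonempty)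
    (h : Derivable (⋃₀ c) A) : ∃ t ∈ c, Derivable t A := by
  induction h with
  | ax hA =>
    obtain ⟨t, htc, hAt⟩ := hA
    exact ⟨t, htc, ax hAt⟩
  | ipc hA => exact ⟨hne.some, hne.some_mem, ipc hA⟩
  | mp _ _ ih₁ ih₂ =>
    obtain ⟨t₁, ht₁, h₁⟩ := ih₁
    obtain ⟨t₂, ht₂, h₂⟩ := ih₂
    rcases hc.total ht₁ ht₂ with h | h
    · exact ⟨t₂, ht₂, mp (h₁.mono h) h₂⟩
    · exact ⟨t₁, ht₁, mp h₁ (h₂.mono h)⟩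

end Derivable

structure IsPrimeTheory (Θ : Set Fm) : Prop where
  closed : ∀ {A : Fm}, Derivable Θ A → A ∈ Θ
  bot_notMem : Fm.bot ∉ Θ
  mem_or_mem : ∀ {A B : Fm}, A.or B ∈ Θ → A ∈ Θ ∨ B ∈ Θ

namespace IsPrimeTheory

variable {Θ : Set Fm} {A B : Fm}

theorem mem_of_ipc_imp (hΘ : IsPrimeTheory Θ) (hAB : IPC (A.imp B)) (hA : A ∈ Θ) : B ∈ Θ :=
  hΘ.closed (.of_ipc_imp hAB (.ax hA))

theorem mem_of_imp_mem (hΘ : IsPrimeTheory Θ) (hAB : A.imp B ∈ Θ) (hA : A ∈ Θ) : B ∈ Θ :=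
  hΘ.closed (.mp (.ax hAB) (.ax hA))

theorem imp_mem_of_derivable (hΘ : IsPrimeTheory Θ) (h : Derivable (insert A Θ) B) : A.imp B ∈ Θ :=
  hΘ.closed h.deduction

theorem and_mem_iff (hΘ : IsPrimeTheory Θ) : A.and B ∈ Θ ↔ A ∈ Θ ∧ B ∈ Θ :=
  ⟨fun h => ⟨hΘ.mem_of_ipc_imp (IPC.and_left A B) h, hΘ.mem_of_ipc_imp (IPC.and_right A B) h⟩,
    fun ⟨hA, hB⟩ => hΘ.mem_of_imp_mem (hΘ.mem_of_ipc_imp (IPC.and_intro A B) hA) hB⟩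

theorem or_mem_iff (hΘ : IsPrimeTheory Θ) : A.or B ∈ Θ ↔ A ∈ Θ ∨ B ∈ Θ :=
  ⟨hΘ.mem_or_mem, Or.rec (hΘ.mem_of_ipc_imp (IPC.or_inl A B)) (hΘ.mem_of_ipc_imp (IPC.or_inr A B))⟩

end IsPrimeTheory

theorem exists_isPrimeTheory_of_not_derivable {Γ : Set Fm} {D : Fm} (h : ¬ Derivable Γ D) :
    ∃ Δ, Γ ⊆ Δ ∧ IsPrimeTheory Δ ∧ ¬ Derivable Δ D := by
  let S : Set (Set Fm) := {Γ' | Γ ⊆ Γ' ∧ ¬ Derivable Γ' D}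
  have hchain : ∀ c ⊆ S, IsChain (· ⊆ ·) c → c.Nonempty → ∃ ub ∈ S, ∀ s ∈ c, s ⊆ ub := by
    intro c hcS hc hne
    refine ⟨⋃₀ c, ⟨?_, fun hD => ?_⟩, fun s hs => Set.subset_sUnion_of_mem hs⟩
    · exact (hcS hne.some_mem).1.trans (Set.subset_sUnion_of_mem hne.some_mem)
    · obtain ⟨t, htc, htD⟩ := Derivable.exists_of_sUnion hc hne hD
      exact (hcS htc).2 htD
  obtain ⟨M, hΓM, ⟨-, hMD⟩, hmax⟩ := zorn_subset_nonempty S hchain Γ ⟨subset_rfl, h⟩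
  have imp_D_of_notMem : ∀ {A : Fm}, A ∉ M → Derivable M (A.imp D) := by
    intro A hA
    refine Derivable.deduction (not_not.1 fun hD => hA ?_)
    exact hmax ⟨hΓM.trans (Set.subset_insert A M), hD⟩ (Set.subset_insert A M)
      (Set.mem_insert A M)
  refine ⟨M, hΓM, ⟨fun hA => ?_, fun hbot => ?_, fun {A B} hAB => ?_⟩, hMD⟩
  · exact not_not.1 fun hAM => hMD (.mp (imp_D_of_notMem hAM) hA)
  · exact hMD (.of_ipc_imp (IPC.exfalso D) (.ax hbot))
  · by_contra! hc
    have hAB_D := Derivable.of_ipc_imp (IPC.or_elim A B D) (imp_D_of_notMem hc.1)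
    exact hMD (.mp (.mp hAB_D (imp_D_of_notMem hc.2)) (.ax hAB))

section Kripke

variable {W : Type*} [Preorder W]

def Forces (V : W → ℕ → Prop) : W → Fm → Prop
  | _, .bot => False
  | w, .atom p => V w p
  | w, .and A B => Forces V w A ∧ Forces V w B
  | w, .or A B => Forces V w A ∨ Forces V w B
  | w, .imp A B => ∀ v, w ≤ v → Forces V v A → Forces V v B

variable {V : W → ℕ → Prop}

theorem Forces.mono (hV : Monotone V) {A : Fm} {w v : W} (hwv : w ≤ v) (h : Forces V w A) :
    Forces V v A := by
  induction A generalizing w v with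
  | bot => exact h
  | atom p => exact hV hwv p h
  | and A B ihA ihB => exact ⟨ihA hwv h.1, ihB hwv h.2⟩
  | or A B ihA ihB => exact h.imp (ihA hwv) (ihB hwv)
  | imp A B _ _ => exact fun u hvu => h u (hwv.trans hvu)

theorem forces_of_ipc (hV : Monotone V) {A : Fm} (h : IPC A) (w : W) : Forces V w A := by
  induction h generalizing w with
  | imp_k A B => exact fun v _ hA u hvu _ => hA.mono hV hvu
  | imp_s A B C =>
    intro _ _ hABC v₂ h₂ hAB v₃ h₃ hA
    exact hABC v₃ (h₂.trans h₃) hA v₃ le_rfl (hAB v₃ h₃ hA)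
  | and_intro A B => exact fun v _ hA u hvu hB => ⟨hA.mono hV hvu, hB⟩
  | and_left A B => exact fun _ _ h => h.1
  | and_right A B => exact fun _ _ h => h.2
  | or_inl A B => exact fun _ _ h => Or.inl h
  | or_inr A B => exact fun _ _ h => Or.inr h
  | or_elim A B C =>
    intro _ _ hAC v₂ h₂ hBC v₃ h₃ hAB
    exact hAB.elim (hAC v₃ (h₂.trans h₃)) (hBC v₃ h₃)
  | exfalso A => exact fun _ _ h => h.elim
  | mp _ _ ih₁ ih₂ => exact ih₁ w w le_rfl (ih₂ w)

theorem forces_bigAndL_iff {w : W} {l : List Fm} :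
    Forces V w (bigAndL l) ↔ ∀ X ∈ l, Forces V w X := by
  induction l with
  | nil => exact ⟨fun _ _ hX => absurd hX List.not_mem_nil, fun _ _ _ h => h⟩
  | cons a l ih =>
    rw [List.forall_mem_cons, ← ih]
    exact Iff.rfl

theorem exists_forces_of_forces_bigOrL {w : W} {l : List Fm} (h : Forces V w (bigOrL l)) :
    ∃ X ∈ l, Forces V w X := by
  induction l with
  | nil => exact h.elim
  | cons a l ih =>
    rcases h with h | h
    · exact ⟨a, List.mem_cons_self, h⟩
    · obtain ⟨X, hX, hXw⟩ := ih h
      exact ⟨X, List.mem_cons_of_mem a hX, hXw⟩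

end Kripke

section RootedModel

abbrev PrimeExt (Γ : Set Fm) := {Θ : Set Fm // IsPrimeTheory Θ ∧ Γ ⊆ Θ}

variable (par : Finset ℕ) (B : Fm) (Δ : Set Fm)

def rootedVal : WithBot (PrimeExt (insert B Δ)) → ℕ → Prop
  | none, p => p ∈ par ∧ .atom p ∈ Δ
  | some Θ, p => .atom p ∈ Θ.1

theorem rootedVal_monotone : Monotone (rootedVal par B Δ) := by
  intro w v hwv p hp
  induction w using WithBot.recBotCoe with
  | bot =>
    induction v using WithBot.recBotCoe with
    | bot => exact hp
    | coe Θ => exact Θ.2.2 (Set.mem_insert_of_mem B hp.2)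
  | coe Θ =>
    induction v using WithBot.recBotCoe with
    | bot => exact absurd hwv (WithBot.not_coe_le_bot Θ)
    | coe Θ' => exact WithBot.coe_le_coe.1 hwv hp

variable {par B Δ}

theorem forces_coe_iff {A : Fm} {Θ : PrimeExt (insert B Δ)} :
    Forces (rootedVal par B Δ) (Θ : WithBot _) A ↔ A ∈ Θ.1 := by
  induction A generalizing Θ with
  | bot => exact ⟨False.elim, Θ.2.1.bot_notMem⟩
  | atom p => exact Iff.rfl
  | and A₁ A₂ ih₁ ih₂ => exact (and_congr ih₁ ih₂).trans Θ.2.1.and_mem_iff.symm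
  | or A₁ A₂ ih₁ ih₂ => exact (or_congr ih₁ ih₂).trans Θ.2.1.or_mem_iff.symm
  | imp A₁ A₂ ih₁ ih₂ =>
    constructor
    · intro hf
      by_contra himp
      obtain ⟨Θ', hΘΘ', hΘ', hA₂⟩ := exists_isPrimeTheory_of_not_derivable
        (Γ := insert A₁ Θ.1) (D := A₂) fun h => himp (Θ.2.1.imp_mem_of_derivable h)
      have hΘ'' : Θ.1 ⊆ Θ' := (Set.subset_insert _ _).trans hΘΘ'
      let Ξ : PrimeExt (insert B Δ) := ⟨Θ', hΘ', Θ.2.2.trans hΘ''⟩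
      have hΘΞ : (Θ : WithBot (PrimeExt (insert B Δ))) ≤ Ξ := WithBot.coe_le_coe.2 hΘ''
      exact hA₂ (.ax (ih₂.1 (hf Ξ hΘΞ (ih₁.2 (hΘΘ' (Set.mem_insert _ _))))))
    · intro h v hv hA₁
      induction v using WithBot.recBotCoe with
      | bot => exact absurd hv (WithBot.not_coe_le_bot Θ)
      | coe Θ' => exact ih₂.2 (Θ'.2.1.mem_of_imp_mem (WithBot.coe_le_coe.1 hv h) (ih₁.1 hA₁))

theorem forces_bot_iff_of_NI (hΔ : IsPrimeTheory Δ) {A : Fm} (hA : NI A) (hpar : A.atoms ⊆ par) :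
    Forces (rootedVal par B Δ) ⊥ A ↔ A ∈ Δ := by
  induction hA with
  | bot => exact ⟨False.elim, hΔ.bot_notMem⟩
  | atom p => exact ⟨And.right, fun h => ⟨hpar (Finset.mem_singleton_self p), h⟩⟩
  | and _ _ ih₁ ih₂ =>
    obtain ⟨hpar₁, hpar₂⟩ := Finset.union_subset_iff.1 hpar
    exact (and_congr (ih₁ hpar₁) (ih₂ hpar₂)).trans hΔ.and_mem_iff.symm
  | or _ _ ih₁ ih₂ =>
    obtain ⟨hpar₁, hpar₂⟩ := Finset.union_subset_iff.1 hpar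
    exact (or_congr (ih₁ hpar₁) (ih₂ hpar₂)).trans hΔ.or_mem_iff.symm

theorem forces_bot_of_NNIL (hΔ : IsPrimeTheory Δ) {A : Fm} (hA : NNIL A) (hpar : A.atoms ⊆ par)
    (hAΔ : A ∈ Δ) : Forces (rootedVal par B Δ) ⊥ A := by
  induction hA with
  | bot => exact hΔ.bot_notMem hAΔ
  | atom p => exact ⟨hpar (Finset.mem_singleton_self p), hAΔ⟩
  | and _ _ ih₁ ih₂ =>
    obtain ⟨hpar₁, hpar₂⟩ := Finset.union_subset_iff.1 hpar
    obtain ⟨hA₁, hA₂⟩ := hΔ.and_mem_iff.1 hAΔ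
    exact ⟨ih₁ hpar₁ hA₁, ih₂ hpar₂ hA₂⟩
  | or _ _ ih₁ ih₂ =>
    obtain ⟨hpar₁, hpar₂⟩ := Finset.union_subset_iff.1 hpar
    exact (hΔ.or_mem_iff.1 hAΔ).imp (ih₁ hpar₁) (ih₂ hpar₂)
  | imp hA₁ _ ih₂ =>
    obtain ⟨hpar₁, hpar₂⟩ := Finset.union_subset_iff.1 hpar
    intro v _ hv
    induction v using WithBot.recBotCoe with
    | bot =>
      exact ih₂ hpar₂ (hΔ.mem_of_imp_mem hAΔ ((forces_bot_iff_of_NI hΔ hA₁ hpar₁).1 hv))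
    | coe Θ =>
      exact forces_coe_iff.2 (Θ.2.2 (Set.mem_insert_of_mem B hAΔ)) Θ le_rfl hv

theorem not_forces_bot_of_imp_notMem (hΔ : IsPrimeTheory Δ) {G : Fm} (hG : B.imp G ∉ Δ) :
    ¬ Forces (rootedVal par B Δ) ⊥ G := by
  intro hf
  obtain ⟨Θ, hBΔΘ, hΘ, hGΘ⟩ := exists_isPrimeTheory_of_not_derivable
    (Γ := insert B Δ) (D := G) fun h => hG (hΔ.imp_mem_of_derivable h)
  let Ξ : PrimeExt (insert B Δ) := ⟨Θ, hΘ, hBΔΘ⟩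
  have hfΞ := hf.mono (rootedVal_monotone par B Δ) (bot_le (a := (Ξ : WithBot _)))
  exact hGΘ (.ax (forces_coe_iff.1 hfΞ))

theorem not_forces_bot_of_hook_notMem (hΔ : IsPrimeTheory Δ) {G : Fm} (hG : hook par B G ∉ Δ) :
    ¬ Forces (rootedVal par B Δ) ⊥ G := by
  match G with
  | .bot => exact id
  | .atom p =>
    by_cases hp : p ∈ par
    · rw [hook, if_pos hp] at hG
      exact fun hf => hG hf.2
    · exact fun hf => hp hf.1
  | .and _ _ | .or _ _ | .imp _ _ => exact not_forces_bot_of_imp_notMem hΔ hG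

theorem forces_bot_bigAndL (hΔ : IsPrimeTheory Δ) {imps : List (Fm × Fm)}
    (hB : B = bigAndL (imps.map fun p => p.1.imp p.2)) (himps : ∀ p ∈ imps, hook par B p.1 ∉ Δ) :
    Forces (rootedVal par B Δ) ⊥ B := by
  have hforces := forces_bigAndL_iff (V := rootedVal par B Δ) (w := ⊥)
    (l := imps.map fun p => p.1.imp p.2)
  rw [← hB] at hforces
  refine hforces.2 fun X hX => ?_
  obtain ⟨p, hp, rfl⟩ := List.mem_map.1 hX
  intro v _ hv
  induction v using WithBot.recBotCoe with
  | bot => exact absurd hv (not_forces_bot_of_hook_notMem hΔ (himps p hp))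
  | coe Θ =>
    have hpΘ : p.1.imp p.2 ∈ Θ.1 :=
      Θ.2.1.mem_of_ipc_imp (hB ▸ IPC.bigAndL_imp_of_mem (List.mem_map_of_mem hp))
        (Θ.2.2 (Set.mem_insert B Δ))
    exact forces_coe_iff.2 hpΘ Θ le_rfl hv

end RootedModel

theorem stmt_18 (par : Finset ℕ) (imps : List (Fm × Fm)) (disjs : List Fm)
    (B C : Fm) (hB : B = bigAndL (imps.map fun p => p.1.imp p.2))
    (hC : C = bigOrL disjs) (E : Fm) (hE : NNIL E) (hEpar : E.atoms ⊆ par)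
    (h : IPC (E.imp (B.imp C))) :
    IPC (E.imp (bigOrL
      ((imps.map fun p => hook par B p.1) ++ disjs.map (hook par B)))) := by
  set hooks := (imps.map fun p => hook par B p.1) ++ disjs.map (hook par B)
  by_contra hnot
  obtain ⟨Δ, hEΔ, hΔ, hΔhooks⟩ := exists_isPrimeTheory_of_not_derivable
    (Γ := insert E ∅) (D := bigOrL hooks) fun hD => hnot hD.deduction.ipc_of_empty
  have hnotMem : ∀ X ∈ hooks, X ∉ Δ := fun X hX hXΔ =>
    hΔhooks (.of_ipc_imp (IPC.imp_bigOrL_of_mem hX) (.ax hXΔ))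
  have hforcesE : Forces (rootedVal par B Δ) ⊥ E :=
    forces_bot_of_NNIL hΔ hE hEpar (hEΔ (Set.mem_insert E ∅))
  have hforcesB := forces_bot_bigAndL hΔ hB fun p hp =>
    hnotMem _ (List.mem_append_left _ (List.mem_map_of_mem hp))
  have hforcesBC := forces_of_ipc (rootedVal_monotone par B Δ) h ⊥ ⊥ le_rfl hforcesE
  have hforcesC := hforcesBC ⊥ le_rfl hforcesB
  rw [hC] at hforcesC
  obtain ⟨G, hG, hGforced⟩ := exists_forces_of_forces_bigOrL hforcesC
  exact not_forces_bot_of_hook_notMem hΔ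
    (hnotMem _ (List.mem_append_right _ (List.mem_map_of_mem hG))) hGforced
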